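/- In the unlearning setup with coherence definitions, for every integer k ≥ 1 the noise-accumulation matrices satisfy Tr(N_k) ≥ (1/(n_r n_f))² (1/d) 2^{−k} (√C_r + √C_f)^{2k} ( Σ_{r=1}^{n_r} Σ_{f=1}^{n_f} Tr(D_{rf}^k) )². -/

import Mathlib

open Matrix Filter Finset Set
open scoped BigOperators

noncomputable section

/-- Frobenius norm of a real square matrix. -/
def frob {n : Type*} [Fintype n] (M : Matrix n n ℝ) : ℝ :=
  Real.sqrt (∑ i, ∑ j, (M i j) ^ 2)

open Classical in
/-- The positive semidefinite square root of a matrix (junk value `0` on non-PSD input). -/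
def psdSqrt {n : Type*} [Fintype n] [DecidableEq n] (A : Matrix n n ℝ) : Matrix n n ℝ :=
  if h : A.PosSemidef then
    (h.1.eigenvectorUnitary : Matrix n n ℝ) *
      diagonal ((RCLike.ofReal : ℝ → ℝ) ∘ (Real.sqrt ∘ h.1.eigenvalues)) *
      (star h.1.eigenvectorUnitary : Matrix n n ℝ)
  else 0

open Classical in
/-- The largest eigenvalue of a symmetric real matrix (junk value `0` otherwise). -/
def lamMax {n : Type*} [Fintype n] [DecidableEq n] (A : Matrix n n ℝ) : ℝ :=
  if h : A.IsHermitian then ⨆ i, h.eigenvalues i else 0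

/-- Probability of observing the Bernoulli(B/n) selection pattern `x`. -/
def selProb (n B : ℕ) (x : Fin n → Bool) : ℝ :=
  ∏ i, if x i then (B : ℝ) / n else 1 - (B : ℝ) / n

/-- Average Hessian of a family. -/
def Hbar {d n : ℕ} (H : Fin n → Matrix (Fin d) (Fin d) ℝ) : Matrix (Fin d) (Fin d) ℝ :=
  (n : ℝ)⁻¹ • ∑ i, H i

/-- Mean update operator `J = I − η(1−α)H_R + ηα H_F`. -/
def Jbar {d nr nf : ℕ} (η α : ℝ) (HR : Fin nr → Matrix (Fin d) (Fin d) ℝ)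
    (HF : Fin nf → Matrix (Fin d) (Fin d) ℝ) : Matrix (Fin d) (Fin d) ℝ :=
  1 - (η * (1 - α)) • Hbar HR + (η * α) • Hbar HF

/-- Random update operator for the batch-selection pattern `x`. -/
def Jop {d nr nf : ℕ} (η α : ℝ) (B : ℕ) (HR : Fin nr → Matrix (Fin d) (Fin d) ℝ)
    (HF : Fin nf → Matrix (Fin d) (Fin d) ℝ)
    (x : (Fin nr → Bool) × (Fin nf → Bool)) : Matrix (Fin d) (Fin d) ℝ :=
  1 - (η * (1 - α) / B) • (∑ r, if x.1 r then HR r else 0)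
    + (η * α / B) • (∑ f, if x.2 f then HF f else 0)

/-- `C_r = η²(1−α)²(1/n_r)(1/B − 1/n_r)`. -/
def Crc (η α : ℝ) (B nr : ℕ) : ℝ :=
  η ^ 2 * (1 - α) ^ 2 * (nr : ℝ)⁻¹ * ((B : ℝ)⁻¹ - (nr : ℝ)⁻¹)

/-- `C_f = η²α²(1/n_f)(1/B − 1/n_f)`. -/
def Cfc (η α : ℝ) (B nf : ℕ) : ℝ :=
  η ^ 2 * α ^ 2 * (nf : ℝ)⁻¹ * ((B : ℝ)⁻¹ - (nf : ℝ)⁻¹)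

/-- Noise-accumulation matrices `N_k`. -/
def Nmat {d nr nf : ℕ} (η α : ℝ) (B : ℕ) (HR : Fin nr → Matrix (Fin d) (Fin d) ℝ)
    (HF : Fin nf → Matrix (Fin d) (Fin d) ℝ) : ℕ → Matrix (Fin d) (Fin d) ℝ
  | 0 => 1
  | k + 1 =>
      Cfc η α B nf • ∑ f, HF f * Nmat η α B HR HF k * HF f
        + Crc η α B nr • ∑ r, HR r * Nmat η α B HR HF k * HR r

/-- `W_k = J_{k−1} ⋯ J_1 J_0` for a finite sequence of batch selections. -/
def Wk {d nr nf : ℕ} (η α : ℝ) (B : ℕ) (HR : Fin nr → Matrix (Fin d) (Fin d) ℝ)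
    (HF : Fin nf → Matrix (Fin d) (Fin d) ℝ) {k : ℕ}
    (s : Fin k → (Fin nr → Bool) × (Fin nf → Bool)) : Matrix (Fin d) (Fin d) ℝ :=
  (List.ofFn fun i => Jop η α B HR HF (s i)).reverse.prod

/-- `E‖w_k‖² = E Tr(W_k W_kᵀ)`, the expectation taken over the i.i.d. Bernoulli
batch selections of the `k` steps. -/
def Ewk2 {d nr nf : ℕ} (η α : ℝ) (B : ℕ) (HR : Fin nr → Matrix (Fin d) (Fin d) ℝ)
    (HF : Fin nf → Matrix (Fin d) (Fin d) ℝ) (k : ℕ) : ℝ :=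
  ∑ s : Fin k → (Fin nr → Bool) × (Fin nf → Bool),
    (∏ i, selProb nr B (s i).1 * selProb nf B (s i).2) *
      (Wk η α B HR HF s * (Wk η α B HR HF s)ᵀ).trace

/-- `E[(e₁ᵀ w_k)²]`, i.e. the `(i0,i0)` entry of `E[W_k W_kᵀ]`. -/
def Ee1 {d nr nf : ℕ} (η α : ℝ) (B : ℕ) (HR : Fin nr → Matrix (Fin d) (Fin d) ℝ)
    (HF : Fin nf → Matrix (Fin d) (Fin d) ℝ) (i0 : Fin d) (k : ℕ) : ℝ :=
  ∑ s : Fin k → (Fin nr → Bool) × (Fin nf → Bool),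
    (∏ i, selProb nr B (s i).1 * selProb nf B (s i).2) *
      ((Wk η α B HR HF s * (Wk η α B HR HF s)ᵀ) i0 i0)

/-- Mixed Hessian `D_{rf} = C'_r H_r^R + C'_f H_f^F` for a retain/forget pair. -/
def Drf {d nr nf : ℕ} (Cr' Cf' : ℝ) (HR : Fin nr → Matrix (Fin d) (Fin d) ℝ)
    (HF : Fin nf → Matrix (Fin d) (Fin d) ℝ) (p : Fin nr × Fin nf) :
    Matrix (Fin d) (Fin d) ℝ :=
  Cr' • HR p.1 + Cf' • HF p.2

/-- Mix-Hessian `D = (1/(n_r n_f)) Σ_{r,f} D_{rf}`. -/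
def Dmix {d nr nf : ℕ} (Cr' Cf' : ℝ) (HR : Fin nr → Matrix (Fin d) (Fin d) ℝ)
    (HF : Fin nf → Matrix (Fin d) (Fin d) ℝ) : Matrix (Fin d) (Fin d) ℝ :=
  ((nr : ℝ) * nf)⁻¹ • ∑ p : Fin nr × Fin nf, Drf Cr' Cf' HR HF p

/-- Mix-coherence matrix `S_{(r,f),(r',f')} = ‖D_{rf}^{1/2} D_{r'f'}^{1/2}‖_F`. -/
def Smat {d nr nf : ℕ} (Cr' Cf' : ℝ) (HR : Fin nr → Matrix (Fin d) (Fin d) ℝ)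
    (HF : Fin nf → Matrix (Fin d) (Fin d) ℝ) :
    Matrix (Fin nr × Fin nf) (Fin nr × Fin nf) ℝ :=
  Matrix.of fun p q =>
    frob (psdSqrt (Drf Cr' Cf' HR HF p) * psdSqrt (Drf Cr' Cf' HR HF q))

/-- Unlearning coherence `σ = λ_max(S) / max_{(r,f)} λ_max(D_{rf})`. -/
def cohSigma {d nr nf : ℕ} (Cr' Cf' : ℝ) (HR : Fin nr → Matrix (Fin d) (Fin d) ℝ)
    (HF : Fin nf → Matrix (Fin d) (Fin d) ℝ) : ℝ :=
  lamMax (Smat Cr' Cf' HR HF) / ⨆ p : Fin nr × Fin nf, lamMax (Drf Cr' Cf' HR HF p)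

/-- Stacked filter-weight vector of the two-layer ReLU CNN signal-plus-noise model. -/
def wvec (d mfil : ℕ) (μ ξi : Fin d → ℝ) (yi : ℝ)
    (ai bi : Bool → Fin mfil → Bool) : (Bool × Fin mfil) × Fin d → ℝ :=
  fun p =>
    ((if p.1.1 then (1 : ℝ) else -1) / mfil) *
      ((if ai p.1.1 p.1.2 then (1 : ℝ) else 0) * μ p.2 +
        (if bi p.1.1 p.1.2 then (1 : ℝ) else 0) * yi * ξi p.2)

/-- Per-sample Hessian `H_i = ℓ''_i w_i w_iᵀ` of the signal-plus-noise model. -/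
def hessCNN (d mfil : ℕ) (μ ξi : Fin d → ℝ) (yi ℓi : ℝ)
    (ai bi : Bool → Fin mfil → Bool) :
    Matrix ((Bool × Fin mfil) × Fin d) ((Bool × Fin mfil) × Fin d) ℝ :=
  ℓi • vecMulVec (wvec d mfil μ ξi yi ai bi) (wvec d mfil μ ξi yi ai bi)

/-- Mixed Hessian `D_{rf} = C'_r H_r + C'_f H_{n_r+f}` in the CNN model, with the
retain set given by the first `n_r` samples and the forget set by the last `n_f`. -/
def DrfCNN (d mfil nr nf : ℕ) (μ : Fin d → ℝ) (ξ : Fin (nr + nf) → Fin d → ℝ)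
    (y ℓ : Fin (nr + nf) → ℝ) (a b : Fin (nr + nf) → Bool → Fin mfil → Bool)
    (Cr' Cf' : ℝ) (p : Fin nr × Fin nf) :
    Matrix ((Bool × Fin mfil) × Fin d) ((Bool × Fin mfil) × Fin d) ℝ :=
  Cr' • hessCNN d mfil μ (ξ (Fin.castAdd nf p.1)) (y (Fin.castAdd nf p.1))
        (ℓ (Fin.castAdd nf p.1)) (a (Fin.castAdd nf p.1)) (b (Fin.castAdd nf p.1))
    + Cf' • hessCNN d mfil μ (ξ (Fin.natAdd nr p.2)) (y (Fin.natAdd nr p.2))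
        (ℓ (Fin.natAdd nr p.2)) (a (Fin.natAdd nr p.2)) (b (Fin.natAdd nr p.2))

/-- Mix-coherence matrix of the CNN model. -/
def SmatCNN (d mfil nr nf : ℕ) (μ : Fin d → ℝ) (ξ : Fin (nr + nf) → Fin d → ℝ)
    (y ℓ : Fin (nr + nf) → ℝ) (a b : Fin (nr + nf) → Bool → Fin mfil → Bool)
    (Cr' Cf' : ℝ) : Matrix (Fin nr × Fin nf) (Fin nr × Fin nf) ℝ :=
  Matrix.of fun p q =>
    frob (psdSqrt (DrfCNN d mfil nr nf μ ξ y ℓ a b Cr' Cf' p) *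
      psdSqrt (DrfCNN d mfil nr nf μ ξ y ℓ a b Cr' Cf' q))

/-!
Put `M_r = √C_r H_r^R`, `M_f = √C_f H_f^F` and `W_w = M_{w₀} ⋯ M_{w_{k-1}}` for a word `w`
in these letters. Unfolding the recursion gives `N_k = Σ_w W_w W_wᵀ`, hence
`d Tr N_k ≥ Σ_w (Tr W_w)²`. On the other hand `(√C_r + √C_f)^k D_{rf}^k = (M_r + M_f)^k` is the
sum of `W_w` over the `2^k` words in the letters `r, f`. Cauchy–Schwarz over the `n_r n_f 2^k`
pairs `((r, f), ε)`, together with the fact that a word comes from at most `n_r n_f` of them,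
bounds `((√C_r + √C_f)^k Σ Tr D_{rf}^k)²` by `(n_r n_f)² 2^k Σ_w (Tr W_w)²`.
-/

section WordProducts

variable {ι A : Type*}

def wordProd [Monoid A] (M : ι → A) {k : ℕ} (w : Fin k → ι) : A :=
  (List.ofFn fun i => M (w i)).prod

@[simp]
lemma wordProd_zero [Monoid A] (M : ι → A) (w : Fin 0 → ι) : wordProd M w = 1 := rfl

lemma wordProd_cons [Monoid A] (M : ι → A) {k : ℕ} (i : ι) (w : Fin k → ι) :
    wordProd M (Fin.cons i w) = M i * wordProd M w := by
  simp [wordProd, List.ofFn_succ]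

lemma sum_wordProd_succ [Monoid A] {β : Type*} [AddCommMonoid β] [Fintype ι] (M : ι → A)
    (f : A → β) (k : ℕ) :
    ∑ w : Fin (k + 1) → ι, f (wordProd M w) =
      ∑ i, ∑ w : Fin k → ι, f (M i * wordProd M w) := by
  rw [← Fintype.sum_prod_type', ← (Fin.consEquiv fun _ => ι).sum_comp]
  simp [Fin.consEquiv, wordProd_cons]

lemma sum_pow_eq_sum_wordProd [Semiring A] [Fintype ι] (M : ι → A) (k : ℕ) :
    (∑ i, M i) ^ k = ∑ w : Fin k → ι, wordProd M w := by
  induction k with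
  | zero => simp
  | succ k ih =>
    rw [pow_succ', ih, Finset.sum_mul_sum]
    exact (sum_wordProd_succ M id k).symm

end WordProducts

lemma Matrix.eq_sum_wordProd_mul_transpose {ι n R : Type*} [Fintype ι] [Fintype n]
    [DecidableEq n] [CommSemiring R] (M : ι → Matrix n n R) {N : ℕ → Matrix n n R}
    (h0 : N 0 = 1) (hsucc : ∀ k, N (k + 1) = ∑ i, M i * N k * (M i)ᵀ) (k : ℕ) :
    N k = ∑ w : Fin k → ι, wordProd M w * (wordProd M w)ᵀ := by
  induction k with
  | zero => simp [h0]
  | succ k ih =>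
    rw [hsucc, ih, sum_wordProd_succ M (fun W => W * Wᵀ)]
    simp only [transpose_mul, Finset.mul_sum, Finset.sum_mul, Matrix.mul_assoc]

lemma Matrix.trace_sq_le_card_mul_trace_mul_transpose {n R : Type*} [Fintype n] [CommRing R]
    [LinearOrder R] [IsStrictOrderedRing R] (A : Matrix n n R) :
    A.trace ^ 2 ≤ Fintype.card n * (A * Aᵀ).trace := by
  have hdiag : ∀ i, A i i ^ 2 ≤ (A * Aᵀ) i i := fun i => by
    simpa [mul_apply, sq] using
      Finset.single_le_sum (f := fun j => A i j * A i j) (fun j _ => mul_self_nonneg _)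
        (Finset.mem_univ i)
  calc A.trace ^ 2 ≤ Fintype.card n * ∑ i, A i i ^ 2 := sq_sum_le_card_mul_sum_sq
    _ ≤ Fintype.card n * (A * Aᵀ).trace := by
      gcongr
      exact Finset.sum_le_sum fun i _ => hdiag i

lemma Finset.sum_comp_le_mul_sum_of_card_fiber_le {α β R : Type*} [Fintype α] [Fintype β]
    [DecidableEq β] [CommSemiring R] [PartialOrder R] [IsOrderedRing R] (φ : α → β) {m : ℕ}
    (hφ : ∀ b, #{a | φ a = b} ≤ m) {f : β → R} (hf : ∀ b, 0 ≤ f b) :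
    ∑ a, f (φ a) ≤ m * ∑ b, f b := by
  rw [← Finset.sum_fiberwise univ φ fun a => f (φ a), Finset.mul_sum]
  refine Finset.sum_le_sum fun b _ => ?_
  rw [Finset.sum_congr rfl fun a ha => congrArg f (Finset.mem_filter.mp ha).2, Finset.sum_const,
    nsmul_eq_mul]
  exact mul_le_mul_of_nonneg_right (Nat.mono_cast (hφ b)) (hf b)

lemma sq_sum_sum_comp_le_of_injective {P β ι R : Type*} [Fintype P] [Fintype β] [Fintype ι]
    [DecidableEq ι] [CommRing R] [LinearOrder R] [IsStrictOrderedRing R] {k : ℕ}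
    (g : P → β → ι) (hg : ∀ p, Function.Injective (g p)) (f : (Fin k → ι) → R) :
    (∑ p, ∑ ε : Fin k → β, f (g p ∘ ε)) ^ 2
      ≤ Fintype.card P ^ 2 * Fintype.card β ^ k * ∑ w, f w ^ 2 := by
  let φ : P × (Fin k → β) → (Fin k → ι) := fun q => g q.1 ∘ q.2
  -- a word determines `ε` once `p` is known, so each fibre of `φ` injects into `P`
  have hfiber : ∀ w, #{q | φ q = w} ≤ Fintype.card P := fun w => by
    refine (Finset.card_le_card_of_injOn Prod.fst (fun _ _ => mem_univ _) ?_).trans_eq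
      Finset.card_univ
    rintro ⟨p, ε⟩ hq ⟨p', ε'⟩ hq' (rfl : p = p')
    have hεε' : g p ∘ ε = g p ∘ ε' := by
      rw [Finset.mem_coe, Finset.mem_filter] at hq hq'
      exact hq.2.trans hq'.2.symm
    rw [(hg p).comp_left hεε']
  calc (∑ p, ∑ ε : Fin k → β, f (g p ∘ ε)) ^ 2 = (∑ q, f (φ q)) ^ 2 := by
        rw [Fintype.sum_prod_type]
    _ ≤ Fintype.card (P × (Fin k → β)) * ∑ q, f (φ q) ^ 2 := sq_sum_le_card_mul_sum_sq
    _ ≤ Fintype.card (P × (Fin k → β)) * (Fintype.card P * ∑ w, f w ^ 2) := by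
        gcongr
        exact Finset.sum_comp_le_mul_sum_of_card_fiber_le φ hfiber fun w => sq_nonneg _
    _ = Fintype.card P ^ 2 * Fintype.card β ^ k * ∑ w, f w ^ 2 := by
        simp only [Fintype.card_prod, Fintype.card_fun, Fintype.card_fin]
        push_cast
        ring

section Unlearning

variable {d nr nf : ℕ} (η α : ℝ) (B : ℕ) (HR : Fin nr → Matrix (Fin d) (Fin d) ℝ)
  (HF : Fin nf → Matrix (Fin d) (Fin d) ℝ)

lemma inv_sub_inv_nonneg_of_le {B n : ℕ} (hB : 0 < B) (hBn : B ≤ n) :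
    0 ≤ (B : ℝ)⁻¹ - (n : ℝ)⁻¹ :=
  sub_nonneg.2 <| inv_anti₀ (by positivity) (by exact_mod_cast hBn)

lemma Crc_nonneg (hB : 0 < B) (hBr : B ≤ nr) : 0 ≤ Crc η α B nr := by
  have := inv_sub_inv_nonneg_of_le hB hBr
  unfold Crc
  positivity

lemma Cfc_nonneg (hB : 0 < B) (hBf : B ≤ nf) : 0 ≤ Cfc η α B nf := by
  have := inv_sub_inv_nonneg_of_le hB hBf
  unfold Cfc
  positivity

def noiseFactor : Fin nr ⊕ Fin nf → Matrix (Fin d) (Fin d) ℝ :=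
  Sum.elim (fun r => √(Crc η α B nr) • HR r) (fun f => √(Cfc η α B nf) • HF f)

variable {η α B HR HF}

lemma Nmat_succ_eq_sum_noiseFactor (hCr : 0 ≤ Crc η α B nr) (hCf : 0 ≤ Cfc η α B nf)
    (hHR : ∀ r, (HR r).IsHermitian) (hHF : ∀ f, (HF f).IsHermitian) (k : ℕ) :
    Nmat η α B HR HF (k + 1) = ∑ i, noiseFactor η α B HR HF i * Nmat η α B HR HF k *
      (noiseFactor η α B HR HF i)ᵀ := by
  have hHRt : ∀ r, (HR r)ᵀ = HR r := fun r => (hHR r).eq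
  have hHFt : ∀ f, (HF f)ᵀ = HF f := fun f => (hHF f).eq
  simp only [Nmat, Fintype.sum_sum_type, noiseFactor, Sum.elim_inl, Sum.elim_inr, transpose_smul,
    hHRt, hHFt, smul_mul_assoc, mul_smul_comm, smul_smul, Real.mul_self_sqrt hCr,
    Real.mul_self_sqrt hCf, ← Finset.smul_sum, add_comm]

lemma Nmat_eq_sum_wordProd (hCr : 0 ≤ Crc η α B nr) (hCf : 0 ≤ Cfc η α B nf)
    (hHR : ∀ r, (HR r).IsHermitian) (hHF : ∀ f, (HF f).IsHermitian) (k : ℕ) :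
    Nmat η α B HR HF k = ∑ w : Fin k → Fin nr ⊕ Fin nf,
      wordProd (noiseFactor η α B HR HF) w * (wordProd (noiseFactor η α B HR HF) w)ᵀ :=
  eq_sum_wordProd_mul_transpose _ rfl (Nmat_succ_eq_sum_noiseFactor hCr hCf hHR hHF) k

lemma trace_Nmat_nonneg (hCr : 0 ≤ Crc η α B nr) (hCf : 0 ≤ Cfc η α B nf)
    (hHR : ∀ r, (HR r).IsHermitian) (hHF : ∀ f, (HF f).IsHermitian) (k : ℕ) :
    0 ≤ (Nmat η α B HR HF k).trace := by
  rw [Nmat_eq_sum_wordProd hCr hCf hHR hHF, trace_sum]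
  exact Finset.sum_nonneg fun w _ => (posSemidef_self_mul_conjTranspose _).trace_nonneg

lemma sum_sq_trace_wordProd_le (hCr : 0 ≤ Crc η α B nr) (hCf : 0 ≤ Cfc η α B nf)
    (hHR : ∀ r, (HR r).IsHermitian) (hHF : ∀ f, (HF f).IsHermitian) (k : ℕ) :
    ∑ w : Fin k → Fin nr ⊕ Fin nf, (wordProd (noiseFactor η α B HR HF) w).trace ^ 2
      ≤ d * (Nmat η α B HR HF k).trace := by
  rw [Nmat_eq_sum_wordProd hCr hCf hHR hHF, trace_sum, Finset.mul_sum]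
  refine Finset.sum_le_sum fun w _ => ?_
  simpa using trace_sq_le_card_mul_trace_mul_transpose (wordProd (noiseFactor η α B HR HF) w)

def pairLetter (p : Fin nr × Fin nf) (b : Bool) : Fin nr ⊕ Fin nf :=
  bif b then .inl p.1 else .inr p.2

lemma pairLetter_injective (p : Fin nr × Fin nf) : Function.Injective (pairLetter p) := by
  rintro (_ | _) (_ | _) h <;> simp_all [pairLetter]

lemma add_smul_Drf_eq_sum_noiseFactor (p : Fin nr × Fin nf) :
    (√(Crc η α B nr) + √(Cfc η α B nf)) •
        Drf (√(Crc η α B nr) / (√(Crc η α B nr) + √(Cfc η α B nf)))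
          (√(Cfc η α B nf) / (√(Crc η α B nr) + √(Cfc η α B nf))) HR HF p
      = ∑ b, noiseFactor η α B HR HF (pairLetter p b) := by
  have hr := Real.sqrt_nonneg (Crc η α B nr)
  have hf := Real.sqrt_nonneg (Cfc η α B nf)
  rw [Drf, smul_add, smul_smul, smul_smul, mul_div_cancel_of_imp' fun h => by linarith,
    mul_div_cancel_of_imp' fun h => by linarith, Fintype.sum_bool]
  rfl

lemma pow_mul_trace_Drf_pow (p : Fin nr × Fin nf) (k : ℕ) :
    (√(Crc η α B nr) + √(Cfc η α B nf)) ^ k *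
        ((Drf (√(Crc η α B nr) / (√(Crc η α B nr) + √(Cfc η α B nf)))
          (√(Cfc η α B nf) / (√(Crc η α B nr) + √(Cfc η α B nf))) HR HF p) ^ k).trace
      = ∑ ε : Fin k → Bool, (wordProd (noiseFactor η α B HR HF) (pairLetter p ∘ ε)).trace := by
  rw [← smul_eq_mul, ← trace_smul, ← smul_pow, add_smul_Drf_eq_sum_noiseFactor,
    sum_pow_eq_sum_wordProd, trace_sum]
  rfl

end Unlearning

theorem stmt11_general (d nr nf B : ℕ)
    (hB : 0 < B) (hBr : B ≤ nr) (hBf : B ≤ nf)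
    (η α : ℝ)
    (HR : Fin nr → Matrix (Fin d) (Fin d) ℝ) (HF : Fin nf → Matrix (Fin d) (Fin d) ℝ)
    (hHR : ∀ r, (HR r).PosSemidef) (hHF : ∀ f, (HF f).PosSemidef) :
    let Cr' : ℝ := Real.sqrt (Crc η α B nr) /
      (Real.sqrt (Crc η α B nr) + Real.sqrt (Cfc η α B nf))
    let Cf' : ℝ := Real.sqrt (Cfc η α B nf) /
      (Real.sqrt (Crc η α B nr) + Real.sqrt (Cfc η α B nf))
    ∀ k, 1 ≤ k →
      (((nr : ℝ) * nf)⁻¹) ^ 2 * (d : ℝ)⁻¹ * (2 : ℝ)⁻¹ ^ k *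
          (Real.sqrt (Crc η α B nr) + Real.sqrt (Cfc η α B nf)) ^ (2 * k) *
          (∑ p : Fin nr × Fin nf, ((Drf Cr' Cf' HR HF p) ^ k).trace) ^ 2
        ≤ (Nmat η α B HR HF k).trace := by
  intro Cr' Cf' k _
  have hCr := Crc_nonneg η α B hB hBr
  have hCf := Cfc_nonneg η α B hB hBf
  have hHR' := fun r => (hHR r).isHermitian
  have hHF' := fun f => (hHF f).isHermitian
  set c := √(Crc η α B nr) + √(Cfc η α B nf)
  set S := ∑ p : Fin nr × Fin nf, ((Drf Cr' Cf' HR HF p) ^ k).trace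
  have hcS : c ^ k * S = ∑ p, ∑ ε : Fin k → Bool,
      (wordProd (noiseFactor η α B HR HF) (pairLetter p ∘ ε)).trace := by
    rw [Finset.mul_sum]
    exact Finset.sum_congr rfl fun p _ => pow_mul_trace_Drf_pow p k
  have key : (c ^ k * S) ^ 2 ≤ ((nr : ℝ) * nf) ^ 2 * 2 ^ k * d * (Nmat η α B HR HF k).trace :=
    calc (c ^ k * S) ^ 2
        ≤ ((nr : ℝ) * nf) ^ 2 * 2 ^ k *
            ∑ w, (wordProd (noiseFactor η α B HR HF) w).trace ^ 2 := by
          simpa [hcS, mul_pow] using sq_sum_sum_comp_le_of_injective pairLetter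
            pairLetter_injective fun w => (wordProd (noiseFactor η α B HR HF) w).trace
      _ ≤ ((nr : ℝ) * nf) ^ 2 * 2 ^ k * (d * (Nmat η α B HR HF k).trace) := by
          gcongr
          exact sum_sq_trace_wordProd_le hCr hCf hHR' hHF' k
      _ = _ := by ring
  calc _ = (((nr : ℝ) * nf) ^ 2 * 2 ^ k * d)⁻¹ * (c ^ k * S) ^ 2 := by
        rw [inv_pow (2 : ℝ) k]
        ring
    _ ≤ (Nmat η α B HR HF k).trace :=
      inv_mul_le_of_le_mul₀ (by positivity) (trace_Nmat_nonneg hCr hCf hHR' hHF' k) key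

/-- coherence lower bound on the noise accumulation.  For every
`k ≥ 1`,
`Tr(N_k) ≥ (1/(n_r n_f))² (1/d) 2^{−k} (√C_r + √C_f)^{2k} (Σ_{r,f} Tr(D_{rf}^k))²`. -/
theorem stmt11 (d nr nf B : ℕ) (hd : 1 ≤ d) (hnr : 1 ≤ nr) (hnf : 1 ≤ nf)
    (hB : 0 < B) (hBr : B ≤ nr) (hBf : B ≤ nf)
    (η α : ℝ) (hη : 0 < η) (hα : α ∈ Set.Icc (0 : ℝ) 1)
    (HR : Fin nr → Matrix (Fin d) (Fin d) ℝ) (HF : Fin nf → Matrix (Fin d) (Fin d) ℝ)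
    (hHR : ∀ r, (HR r).PosSemidef) (hHF : ∀ f, (HF f).PosSemidef)
    (hpos : 0 < Real.sqrt (Crc η α B nr) + Real.sqrt (Cfc η α B nf)) :
    let Cr' : ℝ := Real.sqrt (Crc η α B nr) /
      (Real.sqrt (Crc η α B nr) + Real.sqrt (Cfc η α B nf))
    let Cf' : ℝ := Real.sqrt (Cfc η α B nf) /
      (Real.sqrt (Crc η α B nr) + Real.sqrt (Cfc η α B nf))
    ∀ k, 1 ≤ k →
      (((nr : ℝ) * nf)⁻¹) ^ 2 * (d : ℝ)⁻¹ * (2 : ℝ)⁻¹ ^ k *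
          (Real.sqrt (Crc η α B nr) + Real.sqrt (Cfc η α B nf)) ^ (2 * k) *
          (∑ p : Fin nr × Fin nf, ((Drf Cr' Cf' HR HF p) ^ k).trace) ^ 2
        ≤ (Nmat η α B HR HF k).trace :=
  stmt11_general d nr nf B hB hBr hBf η α HR HF hHR hHF

end
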